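/- arXiv:2203.17073 — 6 statements merged into one kernel-verified Lean document; each statement's English description precedes it below -/
import Mathlib

section
/- If (V,α) and (W,β) are finite-dimensional vector spaces over a non-archimedean field ℓ equipped with splittable non-archimedean norms, then the formula (α⊗β)(z) = min over all representations z = Σ_j v_j ⊗ w_j of max_j α(v_j)β(w_j) defines a non-archimedean norm on V ⊗ W. -/
open scoped TensorProduct

section Preamble

variable {ℓ : Type*} [Field ℓ] {Γ₀ : Type*} [LinearOrderedCommGroupWithZero Γ₀]

/-- The zero element is a bottom element for a linearly ordered commutative group with zero. -/
instance (priority := low) instOrderBotLOCGWZ : OrderBot Γ₀ :=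
  { bot := 0, bot_le := fun _ => zero_le' }

/-- A non-archimedean norm on an `ℓ`-vector space `V`, with values in `Γ₀ = Γ ∪ {0}`,
compatible with the non-archimedean absolute value `v` on `ℓ`. -/
structure NAnorm (v : Valuation ℓ Γ₀) (V : Type*) [AddCommGroup V] [Module ℓ V] where
  toFun : V → Γ₀
  eq_zero_iff' : ∀ x : V, toFun x = 0 ↔ x = 0
  smul' : ∀ (c : ℓ) (x : V), toFun (c • x) = v c * toFun x
  add_le' : ∀ x y : V, toFun (x + y) ≤ max (toFun x) (toFun y)

variable {v : Valuation ℓ Γ₀} {V : Type*} [AddCommGroup V] [Module ℓ V]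

/-- A basis `b` splits the norm `α` if `α (∑ cᵢ • bᵢ) = maxᵢ |cᵢ| α(bᵢ)`. -/
def NAnorm.Splits (α : NAnorm v V) {ι : Type*} [Fintype ι] (b : Module.Basis ι ℓ V) : Prop :=
  ∀ c : ι → ℓ, α.toFun (∑ i, c i • b i) = Finset.univ.sup fun i => v (c i) * α.toFun (b i)

/-- A norm is splittable if it admits a splitting basis. -/
def NAnorm.IsSplittable (α : NAnorm v V) : Prop :=
  ∃ (n : ℕ) (b : Module.Basis (Fin n) ℓ V), α.Splits b

end Preamble

/-- The set of candidate values `max_j α(v_j) β(w_j)` over all representations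
`z = ∑_j v_j ⊗ w_j` of an element of the tensor product. -/
def tensorMinSet {ℓ : Type*} [Field ℓ] {Γ₀ : Type*} [LinearOrderedCommGroupWithZero Γ₀]
    {v : Valuation ℓ Γ₀} {V W : Type*} [AddCommGroup V] [Module ℓ V]
    [AddCommGroup W] [Module ℓ W] (α : NAnorm v V) (β : NAnorm v W)
    (z : V ⊗[ℓ] W) : Set Γ₀ :=
  {g | ∃ (n : ℕ) (vs : Fin n → V) (ws : Fin n → W),
      z = ∑ i, vs i ⊗ₜ[ℓ] ws i ∧
      g = Finset.univ.sup fun i => α.toFun (vs i) * β.toFun (ws i)}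


section Aux

variable {ℓ : Type*} [Field ℓ] {Γ₀ : Type*} [LinearOrderedCommGroupWithZero Γ₀]
variable {v : Valuation ℓ Γ₀} {V : Type*} [AddCommGroup V] [Module ℓ V]

lemma NAnorm.splits_apply (α : NAnorm v V) {n : ℕ} {b : Module.Basis (Fin n) ℓ V}
    (hb : α.Splits b) (x : V) :
    α.toFun x = Finset.univ.sup fun i => v (b.repr x i) * α.toFun (b i) := by
  conv_lhs => rw [← b.sum_repr x]
  exact hb _

lemma sup_equiv_aux {ι κ M : Type*} [Fintype ι] [Fintype κ] [SemilatticeSup M] [OrderBot M]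
    (e : ι ≃ κ) (f : κ → M) : (Finset.univ.sup fun i => f (e i)) = Finset.univ.sup f := by
  refine le_antisymm (Finset.sup_le fun i _ => Finset.le_sup (Finset.mem_univ (e i)))
    (Finset.sup_le fun k _ => ?_)
  simpa using Finset.le_sup (f := fun i => f (e i)) (Finset.mem_univ (e.symm k))

end Aux

/-- the tensor product of two splittable norms, defined by
`(α ⊗ β)(z) = min` over all representations of `max_j α(v_j)β(w_j)`, is a
well-defined non-archimedean norm on `V ⊗ W` (in particular the minimum exists). -/
theorem tensor_norm_exists {ℓ : Type*} [Field ℓ] {Γ₀ : Type*} [LinearOrderedCommGroupWithZero Γ₀]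
    (v : Valuation ℓ Γ₀) (V W : Type*) [AddCommGroup V] [Module ℓ V] [FiniteDimensional ℓ V]
    [AddCommGroup W] [Module ℓ W] [FiniteDimensional ℓ W]
    (α : NAnorm v V) (β : NAnorm v W) (hα : α.IsSplittable) (hβ : β.IsSplittable) :
    ∃ τ : NAnorm v (V ⊗[ℓ] W), ∀ z : V ⊗[ℓ] W, IsLeast (tensorMinSet α β z) (τ.toFun z) := by
  classical
  obtain ⟨m, b, hb⟩ := hα
  obtain ⟨n, c, hc⟩ := hβ
  set B : Module.Basis (Fin m × Fin n) ℓ (V ⊗[ℓ] W) := b.tensorProduct c with hBdef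
  have hBapply : ∀ p : Fin m × Fin n, B p = b p.1 ⊗ₜ[ℓ] c p.2 := fun p =>
    Module.Basis.tensorProduct_apply' b c p
  have hbne : ∀ i, α.toFun (b i) ≠ 0 := fun i => by
    simp [α.eq_zero_iff', b.ne_zero i]
  have hcne : ∀ j, β.toFun (c j) ≠ 0 := fun j => by
    simp [β.eq_zero_iff', c.ne_zero j]
  set T : (V ⊗[ℓ] W) → Γ₀ := fun z => Finset.univ.sup fun p : Fin m × Fin n =>
    v (B.repr z p) * (α.toFun (b p.1) * β.toFun (c p.2)) with hT
  have hzero : ∀ z, T z = 0 ↔ z = 0 := by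
    intro z
    rw [hT]
    show (Finset.univ.sup (β := Fin m × Fin n) _ = (0 : Γ₀)) ↔ _
    rw [← bot_eq_zero (α := Γ₀)]
    rw [Finset.sup_eq_bot_iff]
    constructor
    · intro h
      have h0 : ∀ p : Fin m × Fin n, B.repr z p = 0 := by
        intro p
        have := h p (Finset.mem_univ p)
        rw [bot_eq_zero] at this
        rcases mul_eq_zero.mp this with h1 | h1
        · exact (Valuation.zero_iff v).mp h1
        · exact absurd h1 (mul_ne_zero (hbne p.1) (hcne p.2))
      have : B.repr z = 0 := Finsupp.ext h0
      exact (LinearEquiv.map_eq_zero_iff B.repr).mp this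
    · rintro rfl p _
      show v (B.repr 0 p) * _ = ⊥
      rw [map_zero]
      show v 0 * _ = (⊥ : Γ₀)
      rw [map_zero, zero_mul, bot_eq_zero]
  have hsmul : ∀ (k : ℓ) (z), T (k • z) = v k * T z := by
    intro k z
    rw [hT]
    simp only [map_smul, Finsupp.smul_apply, smul_eq_mul, map_mul, mul_assoc]
    exact (Finset.comp_sup_eq_sup_comp (fun x : Γ₀ => v k * x)
      (fun x y => mul_max _ _ _) (by rw [bot_eq_zero, mul_zero])).symm
  have hadd : ∀ z₁ z₂, T (z₁ + z₂) ≤ max (T z₁) (T z₂) := by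
    intro z₁ z₂
    apply Finset.sup_le
    intro p _
    have h1 : v (B.repr (z₁ + z₂) p) ≤ max (v (B.repr z₁ p)) (v (B.repr z₂ p)) := by
      rw [map_add, Finsupp.add_apply]
      exact v.map_add _ _
    calc v (B.repr (z₁ + z₂) p) * (α.toFun (b p.1) * β.toFun (c p.2))
        ≤ max (v (B.repr z₁ p)) (v (B.repr z₂ p)) * (α.toFun (b p.1) * β.toFun (c p.2)) :=
          mul_le_mul_left h1 _
      _ = max (v (B.repr z₁ p) * (α.toFun (b p.1) * β.toFun (c p.2)))
            (v (B.repr z₂ p) * (α.toFun (b p.1) * β.toFun (c p.2))) := max_mul _ _ _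
      _ ≤ max (T z₁) (T z₂) :=
          max_le_max
            (Finset.le_sup (f := fun p : Fin m × Fin n =>
              v (B.repr z₁ p) * (α.toFun (b p.1) * β.toFun (c p.2))) (Finset.mem_univ p))
            (Finset.le_sup (f := fun p : Fin m × Fin n =>
              v (B.repr z₂ p) * (α.toFun (b p.1) * β.toFun (c p.2))) (Finset.mem_univ p))
  refine ⟨⟨T, hzero, hsmul, hadd⟩, fun z => ⟨?_, ?_⟩⟩
  · -- membership
    refine ⟨m * n,
      fun q => B.repr z (finProdFinEquiv.symm q) • b (finProdFinEquiv.symm q).1,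
      fun q => c (finProdFinEquiv.symm q).2, ?_, ?_⟩
    · conv_lhs => rw [← B.sum_repr z]
      refine Fintype.sum_equiv finProdFinEquiv _ _ fun p => ?_
      simp [hBapply, TensorProduct.smul_tmul']
    · show (Finset.univ.sup fun p : Fin m × Fin n =>
        v (B.repr z p) * (α.toFun (b p.1) * β.toFun (c p.2))) = _
      rw [← sup_equiv_aux finProdFinEquiv.symm
        (fun p : Fin m × Fin n => v (B.repr z p) * (α.toFun (b p.1) * β.toFun (c p.2)))]
      congr 1
      ext q
      rw [α.smul', mul_assoc]
  · -- lower bound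
    rintro g ⟨N, vs, ws, hz, rfl⟩
    show T z ≤ _
    rw [hT]
    apply Finset.sup_le
    rintro ⟨i, j⟩ _
    have hrepr : B.repr z (i, j) = ∑ k, b.repr (vs k) i * c.repr (ws k) j := by
      rw [hz, map_sum, Finset.sum_apply']
      refine Finset.sum_congr rfl fun k _ => ?_
      have h := Module.Basis.tensorProduct_repr_tmul_apply b c (vs k) (ws k) i j
      rw [smul_eq_mul, mul_comm] at h
      exact h
    rw [hrepr]
    have key : ∀ k : Fin N,
        v (b.repr (vs k) i * c.repr (ws k) j) * (α.toFun (b i) * β.toFun (c j))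
          ≤ Finset.univ.sup fun k => α.toFun (vs k) * β.toFun (ws k) := by
      intro k
      have h1 : v (b.repr (vs k) i) * α.toFun (b i) ≤ α.toFun (vs k) := by
        rw [α.splits_apply hb (vs k)]
        exact Finset.le_sup (f := fun i => v (b.repr (vs k) i) * α.toFun (b i))
          (Finset.mem_univ i)
      have h2 : v (c.repr (ws k) j) * β.toFun (c j) ≤ β.toFun (ws k) := by
        rw [β.splits_apply hc (ws k)]
        exact Finset.le_sup (f := fun j => v (c.repr (ws k) j) * β.toFun (c j))
          (Finset.mem_univ j)
      calc v (b.repr (vs k) i * c.repr (ws k) j) * (α.toFun (b i) * β.toFun (c j))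
          = (v (b.repr (vs k) i) * α.toFun (b i)) * (v (c.repr (ws k) j) * β.toFun (c j)) := by
            rw [map_mul]; exact mul_mul_mul_comm _ _ _ _
        _ ≤ α.toFun (vs k) * β.toFun (ws k) := mul_le_mul' h1 h2
        _ ≤ _ := Finset.le_sup (f := fun k => α.toFun (vs k) * β.toFun (ws k))
            (Finset.mem_univ k)
    have hsum : v (∑ k, b.repr (vs k) i * c.repr (ws k) j)
        ≤ Finset.univ.sup fun k => v (b.repr (vs k) i * c.repr (ws k) j) :=
      v.map_sum_le fun k _ =>
        Finset.le_sup (f := fun k => v (b.repr (vs k) i * c.repr (ws k) j))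
          (Finset.mem_univ k)
    calc v (∑ k, b.repr (vs k) i * c.repr (ws k) j) * (α.toFun (b i) * β.toFun (c j))
        ≤ (Finset.univ.sup fun k => v (b.repr (vs k) i * c.repr (ws k) j))
            * (α.toFun (b i) * β.toFun (c j)) := mul_le_mul_left hsum _
      _ = Finset.univ.sup fun k =>
            v (b.repr (vs k) i * c.repr (ws k) j) * (α.toFun (b i) * β.toFun (c j)) :=
          Finset.comp_sup_eq_sup_comp (fun x : Γ₀ => x * (α.toFun (b i) * β.toFun (c j)))
            (fun x y => max_mul _ _ _) (by rw [bot_eq_zero, zero_mul])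
      _ ≤ _ := Finset.sup_le fun k _ => key k
end

section
/- If (e_i)_{1≤i≤n} is a splitting basis of (V,α) and (f_j)_{1≤j≤m} is a splitting basis of (W,β), then the family (e_i ⊗ f_j)_{i,j} is a splitting basis of (V⊗W, α⊗β), where α⊗β is the tensor product norm. -/
open scoped TensorProduct

section Aux

variable {ℓ : Type*} [Field ℓ] {Γ₀ : Type*} [LinearOrderedCommGroupWithZero Γ₀]
  {v : Valuation ℓ Γ₀} {V W : Type*} [AddCommGroup V] [Module ℓ V]
  [AddCommGroup W] [Module ℓ W]

lemma mySupMul {η : Type*} (s : Finset η) (f : η → Γ₀) (a : Γ₀) :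
    s.sup f * a = s.sup fun i => f i * a := by
  have hm : Monotone (· * a) := fun u w h => mul_le_mul_left h a
  exact Finset.comp_sup_eq_sup_comp (· * a) (fun x y => hm.map_sup x y) (by rw [show (⊥ : Γ₀) = 0 from le_antisymm bot_le zero_le', zero_mul])

lemma coeff_le {ι : Type*} [Fintype ι] {α : NAnorm v V} {b : Module.Basis ι ℓ V}
    (hb : α.Splits b) (x : V) (i : ι) :
    v (b.repr x i) * α.toFun (b i) ≤ α.toFun x := by
  conv_rhs => rw [← b.sum_repr x]
  rw [hb fun i => b.repr x i]
  exact Finset.le_sup (f := fun i => v (b.repr x i) * α.toFun (b i)) (Finset.mem_univ i)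

lemma repBound {ι κ : Type*} [Fintype ι] [Fintype κ]
    {α : NAnorm v V} {β : NAnorm v W} {b : Module.Basis ι ℓ V} {c : Module.Basis κ ℓ W}
    (hb : α.Splits b) (hc : β.Splits c) {z : V ⊗[ℓ] W} {n : ℕ}
    {vs : Fin n → V} {ws : Fin n → W} (hz : z = ∑ k, vs k ⊗ₜ[ℓ] ws k) (p : ι × κ) :
    v ((Module.Basis.tensorProduct b c).repr z p) * (α.toFun (b p.1) * β.toFun (c p.2)) ≤
      Finset.univ.sup fun k => α.toFun (vs k) * β.toFun (ws k) := by
  obtain ⟨i, j⟩ := p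
  have hrepr : (Module.Basis.tensorProduct b c).repr z (i, j)
      = ∑ k, b.repr (vs k) i * c.repr (ws k) j := by
    subst hz
    rw [map_sum]
    simp [Module.Basis.tensorProduct_repr_tmul_apply, mul_comm]
  rw [hrepr]
  have h1 : v (∑ k, b.repr (vs k) i * c.repr (ws k) j)
      ≤ Finset.univ.sup fun k => v (b.repr (vs k) i) * v (c.repr (ws k) j) := by
    refine v.map_sum_le fun k _ => ?_
    rw [map_mul]
    exact Finset.le_sup (f := fun k => v (b.repr (vs k) i) * v (c.repr (ws k) j)) (Finset.mem_univ k)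
  refine le_trans (mul_le_mul_left h1 _) ?_
  rw [mySupMul]
  refine Finset.sup_le fun k _ => ?_
  calc v (b.repr (vs k) i) * v (c.repr (ws k) j) * (α.toFun (b i) * β.toFun (c j))
      = (v (b.repr (vs k) i) * α.toFun (b i)) * (v (c.repr (ws k) j) * β.toFun (c j)) :=
        mul_mul_mul_comm _ _ _ _
    _ ≤ α.toFun (vs k) * β.toFun (ws k) :=
        mul_le_mul' (coeff_le hb (vs k) i) (coeff_le hc (ws k) j)
    _ ≤ _ := Finset.le_sup (f := fun k => α.toFun (vs k) * β.toFun (ws k)) (Finset.mem_univ k)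

lemma tau_basis {ι κ : Type*} [Fintype ι] [Fintype κ]
    {α : NAnorm v V} {β : NAnorm v W} {b : Module.Basis ι ℓ V} {c : Module.Basis κ ℓ W}
    (hb : α.Splits b) (hc : β.Splits c) {τ : NAnorm v (V ⊗[ℓ] W)}
    (hτ : ∀ z : V ⊗[ℓ] W, IsLeast (tensorMinSet α β z) (τ.toFun z)) (i : ι) (j : κ) :
    τ.toFun (b i ⊗ₜ[ℓ] c j) = α.toFun (b i) * β.toFun (c j) := by
  refine le_antisymm ?_ ?_
  · refine (hτ _).2 ⟨1, ![b i], ![c j], by simp, by simp⟩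
  · obtain ⟨n, vs, ws, hz, hsup⟩ := (hτ (b i ⊗ₜ[ℓ] c j)).1
    have h := repBound hb hc hz (i, j)
    rw [← hsup] at h
    simpa [Module.Basis.tensorProduct_repr_tmul_apply] using h

end Aux

/-- if `(eᵢ)` splits `(V,α)` and `(f_j)` splits `(W,β)`, then
`(eᵢ ⊗ f_j)` splits the tensor product norm `α ⊗ β` (any norm `τ` realizing the
minimum formula). -/
theorem tensor_basis_splits {ℓ : Type*} [Field ℓ] {Γ₀ : Type*}
    [LinearOrderedCommGroupWithZero Γ₀]
    (v : Valuation ℓ Γ₀) (V W : Type*) [AddCommGroup V] [Module ℓ V]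
    [AddCommGroup W] [Module ℓ W]
    (α : NAnorm v V) (β : NAnorm v W)
    {ι κ : Type*} [Fintype ι] [Fintype κ]
    (b : Module.Basis ι ℓ V) (c : Module.Basis κ ℓ W)
    (hb : α.Splits b) (hc : β.Splits c)
    (τ : NAnorm v (V ⊗[ℓ] W))
    (hτ : ∀ z : V ⊗[ℓ] W, IsLeast (tensorMinSet α β z) (τ.toFun z)) :
    τ.Splits (Module.Basis.tensorProduct b c) := by
  intro d
  set B := Module.Basis.tensorProduct b c with hB
  set z : V ⊗[ℓ] W := ∑ p, d p • B p with hzdef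
  have hrepr : ∀ p, B.repr z p = d p := by
    intro p
    rw [hzdef, B.repr_sum_self]
  have htb : ∀ p : ι × κ, τ.toFun (B p) = α.toFun (b p.1) * β.toFun (c p.2) := by
    intro p
    rw [hB, Module.Basis.tensorProduct_apply']
    exact tau_basis hb hc hτ p.1 p.2
  refine le_antisymm ?_ ?_
  · -- upper bound via explicit representation
    set e : Fin (Fintype.card (ι × κ)) ≃ (ι × κ) := (Fintype.equivFin (ι × κ)).symm with he
    have hzrep : z = ∑ k, (d (e k) • b (e k).1) ⊗ₜ[ℓ] c (e k).2 := by
      rw [hzdef, ← e.sum_comp fun p => d p • B p]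
      refine Finset.sum_congr rfl fun k _ => ?_
      rw [hB, Module.Basis.tensorProduct_apply', TensorProduct.smul_tmul']
    have hmem : (Finset.univ.sup fun k => α.toFun (d (e k) • b (e k).1) * β.toFun (c (e k).2))
        ∈ tensorMinSet α β z :=
      ⟨_, _, _, hzrep, rfl⟩
    refine le_trans ((hτ z).2 hmem) ?_
    refine Finset.sup_le fun k _ => ?_
    rw [α.smul', mul_assoc, ← htb (e k)]
    exact Finset.le_sup (f := fun p => v (d p) * τ.toFun (B p)) (Finset.mem_univ (e k))
  · -- lower bound via coefficient estimate
    obtain ⟨n, vs, ws, hz, hsup⟩ := (hτ z).1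
    refine Finset.sup_le fun p _ => ?_
    have h := repBound hb hc hz p
    rw [hrepr p, ← hsup, ← htb p] at h
    exact h
end

section
/- Let (V,α) be a finite-dimensional normed vector space over a non-archimedean field ℓ with a splittable norm. Then α*(φ) := max{|φ(v)|/α(v) : v ∈ V \ {0}} defines a norm on the dual space V*, and the dual basis of any splitting basis of α is a splitting basis of α*. -/
open scoped TensorProduct

/-- Pulling a constant factor out of a finite sup in a linearly ordered
commutative group with zero. -/
lemma sup_mul_left {Γ₀ : Type*} [LinearOrderedCommGroupWithZero Γ₀] {ι : Type*}
    (s : Finset ι) (hs : s.Nonempty) (a : Γ₀) (f : ι → Γ₀) :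
    (s.sup fun i => a * f i) = a * s.sup f := by
  apply le_antisymm
  · exact Finset.sup_le fun i hi => mul_le_mul_right (Finset.le_sup hi) a
  · obtain ⟨i, hi, h⟩ := s.exists_mem_eq_sup hs f
    rw [h]
    exact Finset.le_sup (f := fun i => a * f i) hi

/-- the dual norm `α*(φ) = max_{x ≠ 0} |φ(x)|/α(x)` is a well-defined
norm on the dual space (in particular the maximum exists), and the dual basis of any
splitting basis of `α` is a splitting basis of `α*`. -/
theorem dual_norm_exists {ℓ : Type*} [Field ℓ] {Γ₀ : Type*}
    [LinearOrderedCommGroupWithZero Γ₀]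
    (v : Valuation ℓ Γ₀) (V : Type*) [AddCommGroup V] [Module ℓ V]
    [FiniteDimensional ℓ V] [Nontrivial V]
    (α : NAnorm v V) {ι : Type*} [Fintype ι] [DecidableEq ι]
    (b : Module.Basis ι ℓ V) (hb : α.Splits b) :
    ∃ αs : NAnorm v (Module.Dual ℓ V),
      (∀ φ : Module.Dual ℓ V,
        IsGreatest {g : Γ₀ | ∃ x : V, x ≠ 0 ∧ g = v (φ x) / α.toFun x} (αs.toFun φ)) ∧
      αs.Splits b.dualBasis := by
  classical
  have hne : Nonempty ι := b.index_nonempty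
  have huniv : (Finset.univ : Finset ι).Nonempty := Finset.univ_nonempty
  have hαb : ∀ i, α.toFun (b i) ≠ 0 := fun i h => b.ne_zero i ((α.eq_zero_iff' (b i)).mp h)
  have hαbpos : ∀ i, 0 < α.toFun (b i) := fun i => zero_lt_iff.mpr (hαb i)
  have hαx : ∀ x : V, x ≠ 0 → 0 < α.toFun x := fun x hx =>
    zero_lt_iff.mpr (fun h => hx ((α.eq_zero_iff' x).mp h))
  set M : Module.Dual ℓ V → Γ₀ :=
    fun φ => Finset.univ.sup fun i => v (φ (b i)) / α.toFun (b i) with hMdef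
  -- the key bound
  have hbound : ∀ (φ : Module.Dual ℓ V) (x : V), v (φ x) ≤ M φ * α.toFun x := by
    intro φ x
    have hax : α.toFun x = Finset.univ.sup fun i => v (b.repr x i) * α.toFun (b i) := by
      conv_lhs => rw [← b.sum_repr x]
      exact hb _
    have hφx : φ x = ∑ i, b.repr x i * φ (b i) := by
      conv_lhs => rw [← b.sum_repr x]
      simp [map_sum, map_smul, smul_eq_mul, -Module.Basis.sum_repr]
    rw [hφx]
    refine v.map_sum_le fun i _ => ?_
    rw [map_mul]
    have h1 : v (φ (b i)) ≤ M φ * α.toFun (b i) :=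
      (div_le_iff₀ (hαbpos i)).mp
        (Finset.le_sup (f := fun i => v (φ (b i)) / α.toFun (b i)) (Finset.mem_univ i))
    have h2 : v (b.repr x i) * α.toFun (b i) ≤ α.toFun x := by
      rw [hax]
      exact Finset.le_sup (f := fun i => v (b.repr x i) * α.toFun (b i)) (Finset.mem_univ i)
    calc v (b.repr x i) * v (φ (b i)) ≤ v (b.repr x i) * (M φ * α.toFun (b i)) :=
          mul_le_mul_right h1 _
      _ = M φ * (v (b.repr x i) * α.toFun (b i)) := mul_left_comm _ _ _
      _ ≤ M φ * α.toFun x := mul_le_mul_right h2 _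
  refine ⟨⟨M, ?_, ?_, ?_⟩, ?_, ?_⟩
  · -- eq_zero_iff'
    intro φ
    constructor
    · intro h
      refine b.ext fun i => ?_
      have hi : v (φ (b i)) / α.toFun (b i) = 0 :=
        le_antisymm (h ▸ Finset.le_sup (f := fun i => v (φ (b i)) / α.toFun (b i))
          (Finset.mem_univ i)) zero_le'
      rcases div_eq_zero_iff.mp hi with h' | h'
      · simpa using (Valuation.zero_iff v).mp h'
      · exact absurd h' (hαb i)
    · rintro rfl
      simpa [hMdef] using Finset.sup_const huniv (0 : Γ₀)
  · -- smul'
    intro c φ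
    have : (fun i => v ((c • φ) (b i)) / α.toFun (b i)) =
        fun i => v c * (v (φ (b i)) / α.toFun (b i)) := by
      funext i
      simp [LinearMap.smul_apply, smul_eq_mul, map_mul, mul_div_assoc]
    simp only [hMdef, this]
    exact sup_mul_left _ huniv _ _
  · -- add_le'
    intro φ ψ
    refine Finset.sup_le fun i _ => ?_
    have h1 : v ((φ + ψ) (b i)) ≤ max (v (φ (b i))) (v (ψ (b i))) := by
      simp only [LinearMap.add_apply]
      exact v.map_add _ _
    calc v ((φ + ψ) (b i)) / α.toFun (b i)
        ≤ max (v (φ (b i))) (v (ψ (b i))) / α.toFun (b i) := by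
          rw [div_eq_mul_inv, div_eq_mul_inv]
          exact mul_le_mul_left h1 _
      _ = max (v (φ (b i)) / α.toFun (b i)) (v (ψ (b i)) / α.toFun (b i)) := by
          rw [div_eq_mul_inv, div_eq_mul_inv, div_eq_mul_inv, max_mul_mul_right]
      _ ≤ max (M φ) (M ψ) :=
          max_le_max
            (Finset.le_sup (f := fun i => v (φ (b i)) / α.toFun (b i)) (Finset.mem_univ i))
            (Finset.le_sup (f := fun i => v (ψ (b i)) / α.toFun (b i)) (Finset.mem_univ i))
  · -- IsGreatest
    intro φ
    constructor
    · obtain ⟨i₀, _, h⟩ := Finset.univ.exists_mem_eq_sup huniv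
        (fun i => v (φ (b i)) / α.toFun (b i))
      exact ⟨b i₀, b.ne_zero i₀, h⟩
    · rintro g ⟨x, hx, rfl⟩
      exact (div_le_iff₀ (hαx x hx)).mpr (hbound φ x)
  · -- Splits dual basis
    intro c
    have hdual : ∀ j, M (b.dualBasis j) = (α.toFun (b j))⁻¹ := by
      intro j
      apply le_antisymm
      · refine Finset.sup_le fun i _ => ?_
        rcases eq_or_ne i j with rfl | h
        · simp [Module.Basis.dualBasis_apply_self, div_eq_mul_inv]
        · simp [Module.Basis.dualBasis_apply_self, h]
      · have : v (b.dualBasis j (b j)) / α.toFun (b j) = (α.toFun (b j))⁻¹ := by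
          simp [Module.Basis.dualBasis_apply_self, div_eq_mul_inv]
        exact this ▸ Finset.le_sup
          (f := fun i => v (b.dualBasis j (b i)) / α.toFun (b i)) (Finset.mem_univ j)
    have happ : ∀ j, (∑ i, c i • b.dualBasis i) (b j) = c j := by
      intro j
      simp [LinearMap.sum_apply, LinearMap.smul_apply, Module.Basis.dualBasis_apply_self,
        smul_eq_mul, mul_boole, Finsupp.single_apply]
    show M (∑ i, c i • b.dualBasis i) = _
    calc M (∑ i, c i • b.dualBasis i)
        = Finset.univ.sup fun j => v (c j) / α.toFun (b j) := by simp only [hMdef, happ]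
      _ = Finset.univ.sup fun j => v (c j) * M (b.dualBasis j) := by
          refine Finset.sup_congr rfl fun j _ => ?_
          rw [hdual j, div_eq_mul_inv]
end

section
/- Let (V,α) be a finite-dimensional normed vector space over a non-archimedean field ℓ with splittable norm, let m be a non-archimedean field extension of ℓ, and define α_m on V ⊗_ℓ m by α_m(w) = min over representations w = Σ v_i ⊗ λ_i of max_i |λ_i|α(v_i). Then α_m is a norm on V ⊗_ℓ m which restricts to α on V ⊗ 1, and the image of any splitting basis of α is a splitting basis of α_m. -/
open scoped TensorProduct

section Aux

variable {ℓ : Type*} [Field ℓ] {Γ₀ : Type*} [LinearOrderedCommGroupWithZero Γ₀]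
variable {v : Valuation ℓ Γ₀} {V : Type*} [AddCommGroup V] [Module ℓ V]

lemma NAnorm.map_zero'' (α : NAnorm v V) : α.toFun 0 = 0 := (α.eq_zero_iff' 0).2 rfl

lemma NAnorm.sum_le'' {κ : Type*} [DecidableEq κ] (α : NAnorm v V) (s : Finset κ) (f : κ → V) :
    α.toFun (∑ i ∈ s, f i) ≤ s.sup fun i => α.toFun (f i) := by
  induction s using Finset.induction_on with
  | empty =>
    rw [Finset.sum_empty, α.map_zero'']
    exact zero_le'
  | insert _ _ hx ih =>
    rw [Finset.sum_insert hx, Finset.sup_insert]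
    exact (α.add_le' _ _).trans (max_le_max le_rfl ih)

lemma mul_max'' (a b c : Γ₀) : a * max b c = max (a * b) (a * c) := by
  rcases le_total b c with h | h
  · rw [max_eq_right h, max_eq_right (mul_le_mul_right h a)]
  · rw [max_eq_left h, max_eq_left (mul_le_mul_right h a)]

lemma max_mul'' (a b c : Γ₀) : max a b * c = max (a * c) (b * c) := by
  rw [mul_comm, mul_max'', mul_comm c a, mul_comm c b]

lemma mul_finset_sup'' {κ : Type*} [DecidableEq κ] (a : Γ₀) (s : Finset κ) (f : κ → Γ₀) :
    a * s.sup f = s.sup fun i => a * f i := by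
  induction s using Finset.induction_on with
  | empty => simp [bot_eq_zero]
  | insert _ _ hx ih =>
    rw [Finset.sup_insert, Finset.sup_insert, ← ih, mul_max'']

lemma sup_equiv_fin'' {κ : Type*} [Fintype κ] (e : κ ≃ Fin (Fintype.card κ)) (f : κ → Γ₀) :
    (Finset.univ.sup fun j : Fin (Fintype.card κ) => f (e.symm j)) = Finset.univ.sup f := by
  apply le_antisymm
  · exact Finset.sup_le fun j _ => Finset.le_sup (Finset.mem_univ _)
  · refine Finset.sup_le fun i _ => ?_
    have h := Finset.le_sup (f := fun j : Fin (Fintype.card κ) => f (e.symm j))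
      (Finset.mem_univ (e i))
    simpa using h

end Aux

/-- base change of a splittable norm along a non-archimedean extension
`ℓ ⊆ m`: the formula `α_m(z) = min over representations z = ∑ λᵢ ⊗ vᵢ of
max |λᵢ| α(vᵢ)` defines a norm on `m ⊗_ℓ V` restricting to `α` on `V`, and the image
of any splitting basis of `α` is a splitting basis of `α_m`. -/
theorem base_change_norm {ℓ m : Type*} [Field ℓ] [Field m] [Algebra ℓ m]
    {Γ₀ : Type*} [LinearOrderedCommGroupWithZero Γ₀]
    (v : Valuation ℓ Γ₀) (w : Valuation m Γ₀)
    (hext : ∀ c : ℓ, w (algebraMap ℓ m c) = v c)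
    (V : Type*) [AddCommGroup V] [Module ℓ V] [FiniteDimensional ℓ V]
    (α : NAnorm v V) {ι : Type*} [Fintype ι] (b : Module.Basis ι ℓ V) (hb : α.Splits b) :
    ∃ β : NAnorm w (m ⊗[ℓ] V),
      (∀ z : m ⊗[ℓ] V,
        IsLeast {g : Γ₀ | ∃ (n : ℕ) (cs : Fin n → m) (vs : Fin n → V),
          z = ∑ i, cs i ⊗ₜ[ℓ] vs i ∧
          g = Finset.univ.sup fun i => w (cs i) * α.toFun (vs i)} (β.toFun z)) ∧
      (∀ x : V, β.toFun ((1 : m) ⊗ₜ[ℓ] x) = α.toFun x) ∧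
      β.Splits (Module.Basis.baseChange m b) := by
  classical
  set B : Module.Basis ι m (m ⊗[ℓ] V) := Module.Basis.baseChange m b with hB
  set βf : m ⊗[ℓ] V → Γ₀ :=
    fun z => Finset.univ.sup fun i => w (B.repr z i) * α.toFun (b i) with hβf
  have hbne : ∀ i, α.toFun (b i) ≠ 0 := fun i h =>
    b.ne_zero i ((α.eq_zero_iff' (b i)).1 h)
  have heq0 : ∀ z : m ⊗[ℓ] V, βf z = 0 ↔ z = 0 := by
    intro z
    constructor
    · intro h
      have h' : ∀ i ∈ Finset.univ, w (B.repr z i) * α.toFun (b i) = (⊥ : Γ₀) :=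
        (Finset.sup_eq_bot_iff _ _).1 (h.trans bot_eq_zero.symm)
      have hrz : B.repr z = 0 := by
        ext i
        have hi := h' i (Finset.mem_univ i)
        rcases mul_eq_zero.1 (hi.trans bot_eq_zero) with h0 | h0
        · exact (Valuation.zero_iff w).1 h0
        · exact absurd h0 (hbne i)
      simpa using B.repr.injective (by simpa using hrz)
    · intro h
      subst h
      rw [hβf]
      simp only [map_zero, Finsupp.coe_zero, Pi.zero_apply, Valuation.map_zero, zero_mul]
      rw [← bot_eq_zero]
      exact (Finset.sup_eq_bot_iff _ _).2 fun i _ => rfl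
  have hsmul : ∀ (c : m) (z : m ⊗[ℓ] V), βf (c • z) = w c * βf z := by
    intro c z
    rw [hβf]
    simp only [map_smul, Finsupp.smul_apply, smul_eq_mul, Valuation.map_mul]
    rw [mul_finset_sup'']
    congr 1
    ext i
    rw [mul_assoc]
  have hadd : ∀ x y : m ⊗[ℓ] V, βf (x + y) ≤ max (βf x) (βf y) := by
    intro x y
    refine Finset.sup_le fun i _ => ?_
    have h1 : w (B.repr (x + y) i) ≤ max (w (B.repr x i)) (w (B.repr y i)) := by
      rw [map_add]
      exact w.map_add _ _
    calc w (B.repr (x + y) i) * α.toFun (b i)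
        ≤ max (w (B.repr x i)) (w (B.repr y i)) * α.toFun (b i) :=
          mul_le_mul_left h1 _
      _ = max (w (B.repr x i) * α.toFun (b i)) (w (B.repr y i) * α.toFun (b i)) :=
          max_mul'' _ _ _
      _ ≤ max (βf x) (βf y) :=
          max_le_max
            (Finset.le_sup (f := fun i => w (B.repr x i) * α.toFun (b i)) (Finset.mem_univ i))
            (Finset.le_sup (f := fun i => w (B.repr y i) * α.toFun (b i)) (Finset.mem_univ i))
  have hres : ∀ x : V, βf ((1 : m) ⊗ₜ[ℓ] x) = α.toFun x := by
    intro x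
    rw [hβf]
    calc (Finset.univ.sup fun i => w (B.repr ((1 : m) ⊗ₜ[ℓ] x) i) * α.toFun (b i))
        = Finset.univ.sup fun i => v (b.repr x i) * α.toFun (b i) := by
          congr 1
          ext i
          rw [hB, Module.Basis.baseChange_repr_tmul, Algebra.smul_def, mul_one, hext]
      _ = α.toFun (∑ i, b.repr x i • b i) := (hb _).symm
      _ = α.toFun x := by rw [b.sum_repr]
  have hBval : ∀ i, βf (B i) = α.toFun (b i) := by
    intro i
    rw [hB, Module.Basis.baseChange_apply]
    exact hres (b i)
  refine ⟨⟨βf, heq0, hsmul, hadd⟩, ?_, hres, ?_⟩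
  · intro z
    constructor
    · -- membership
      set e := Fintype.equivFin ι with he
      refine ⟨Fintype.card ι, fun j => B.repr z (e.symm j), fun j => b (e.symm j), ?_, ?_⟩
      · have h1 : ∑ j : Fin (Fintype.card ι), (B.repr z (e.symm j)) ⊗ₜ[ℓ] b (e.symm j)
            = ∑ i, (B.repr z i) ⊗ₜ[ℓ] b i :=
          Equiv.sum_comp e.symm fun i => (B.repr z i) ⊗ₜ[ℓ] b i
        have h2 : ∀ i, (B.repr z i) ⊗ₜ[ℓ] b i = (B.repr z i) • B i := by
          intro i
          rw [hB, Module.Basis.baseChange_apply, TensorProduct.smul_tmul', smul_eq_mul, mul_one]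
        rw [h1]
        simp_rw [h2]
        exact (B.sum_repr z).symm
      · exact (sup_equiv_fin'' e fun i => w (B.repr z i) * α.toFun (b i)).symm
    · -- lower bound
      rintro g ⟨n, cs, vs, rfl, rfl⟩
      set β : NAnorm w (m ⊗[ℓ] V) := ⟨βf, heq0, hsmul, hadd⟩ with hβ
      refine le_trans (β.sum_le'' Finset.univ fun j => cs j ⊗ₜ[ℓ] vs j)
        (Finset.sup_le fun j _ => ?_)
      have ht : (cs j) ⊗ₜ[ℓ] (vs j) = cs j • ((1 : m) ⊗ₜ[ℓ] vs j) := by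
        rw [TensorProduct.smul_tmul', smul_eq_mul, mul_one]
      have : β.toFun (cs j ⊗ₜ[ℓ] vs j) = w (cs j) * α.toFun (vs j) := by
        rw [ht]
        show βf _ = _
        rw [hsmul, hres]
      rw [this]
      exact Finset.le_sup (f := fun i => w (cs i) * α.toFun (vs i)) (Finset.mem_univ j)
  · intro c
    show βf (∑ i, c i • B i) = Finset.univ.sup fun i => w (c i) * βf (B i)
    rw [hβf]
    have h1 : B.repr (∑ i, c i • B i) = Finsupp.equivFunOnFinite.symm c := by
      have := B.repr_sum_self c
      ext j
      rw [show ((B.repr (∑ i, c i • B i)) : ι → m) = c from this]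
      simp
    calc (Finset.univ.sup fun i => w (B.repr (∑ i, c i • B i) i) * α.toFun (b i))
        = Finset.univ.sup fun i => w (c i) * α.toFun (b i) := by
          congr 1
          ext i
          rw [show (B.repr (∑ i, c i • B i)) i = c i from congrFun (B.repr_sum_self c) i]
      _ = Finset.univ.sup fun i => w (c i) * βf (B i) := by
          congr 1
          ext i
          rw [hBval]
end

section
/- Let g and h be bounded linear endomorphisms of a normed vector space (V,α) such that for every γ and every v with α(v) ≤ γ one has α(g(v)−v) ≤ δγ and α(h(v)−v) ≤ δ'γ, for fixed δ, δ' ≤ 1 in Γ, and suppose g and h are invertible with bounded inverses satisfying the same bounds. Then the commutator ghg⁻¹h⁻¹ satisfies α(ghg⁻¹h⁻¹(v) − v) ≤ δδ'·α(v) for all v ∈ V. -/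
open scoped TensorProduct

/-- if `g, h` are bounded automorphisms of `(V,α)`, with bounded
inverses, such that `g, g⁻¹` (resp. `h, h⁻¹`) move every vector by at most a factor
`δ ≤ 1` (resp. `δ' ≤ 1`), then the commutator `g h g⁻¹ h⁻¹` moves every vector by at
most a factor `δ δ'`. -/
theorem commutator_estimate {ℓ : Type*} [Field ℓ] {Γ₀ : Type*}
    [LinearOrderedCommGroupWithZero Γ₀] (v : Valuation ℓ Γ₀)
    (V : Type*) [AddCommGroup V] [Module ℓ V] (α : NAnorm v V)
    (δ δ' : Γ₀) (hδ : δ ≤ 1) (hδ' : δ' ≤ 1)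
    (g h g' h' : V →ₗ[ℓ] V)
    (hgg' : g.comp g' = LinearMap.id) (hg'g : g'.comp g = LinearMap.id)
    (hhh' : h.comp h' = LinearMap.id) (hh'h : h'.comp h = LinearMap.id)
    (hgb : ∀ x : V, α.toFun (g x) ≤ α.toFun x)
    (hhb : ∀ x : V, α.toFun (h x) ≤ α.toFun x)
    (hg'b : ∀ x : V, α.toFun (g' x) ≤ α.toFun x)
    (hh'b : ∀ x : V, α.toFun (h' x) ≤ α.toFun x)
    (hgδ : ∀ x : V, α.toFun (g x - x) ≤ δ * α.toFun x)
    (hg'δ : ∀ x : V, α.toFun (g' x - x) ≤ δ * α.toFun x)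
    (hhδ : ∀ x : V, α.toFun (h x - x) ≤ δ' * α.toFun x)
    (hh'δ : ∀ x : V, α.toFun (h' x - x) ≤ δ' * α.toFun x) :
    ∀ x : V, α.toFun (g (h (g' (h' x))) - x) ≤ δ * δ' * α.toFun x := by
  intro x
  have hneg : ∀ y : V, α.toFun (-y) = α.toFun y := by
    intro y
    have := α.smul' (-1 : ℓ) y
    simpa [Valuation.map_neg, neg_one_smul] using this
  have hsub : ∀ a b : V, α.toFun (a - b) ≤ max (α.toFun a) (α.toFun b) := by
    intro a b
    have := α.add_le' a (-b)
    simpa [sub_eq_add_neg, hneg] using this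
  have hh : ∀ y : V, h (h' y) = y := fun y => congrFun (congrArg DFunLike.coe hhh') y
  have hgg : ∀ y : V, g (g' y) = y := fun y => congrFun (congrArg DFunLike.coe hgg') y
  -- the key algebraic identity: g' h' x - h' g' x = (g'-1)(h'-1)x - (h'-1)(g'-1)x
  set a : V := h' x - x with ha
  set b : V := g' x - x with hb
  set w : V := (g' a - a) - (h' b - b) with hw
  have hwval : g (h (g' (h' x))) - x = g (h w) := by
    have : w = g' (h' x) - h' (g' x) := by
      simp only [hw, ha, hb, map_sub]; abel
    rw [this]
    simp [map_sub, hh, hgg]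
  -- bounds on the two pieces
  have h1 : α.toFun (g' a - a) ≤ δ * δ' * α.toFun x :=
    calc α.toFun (g' a - a) ≤ δ * α.toFun a := hg'δ a
      _ ≤ δ * (δ' * α.toFun x) := mul_le_mul_right (hh'δ x) δ
      _ = δ * δ' * α.toFun x := (mul_assoc _ _ _).symm
  have h2 : α.toFun (h' b - b) ≤ δ * δ' * α.toFun x :=
    calc α.toFun (h' b - b) ≤ δ' * α.toFun b := hh'δ b
      _ ≤ δ' * (δ * α.toFun x) := mul_le_mul_right (hg'δ x) δ'
      _ = δ * δ' * α.toFun x := by rw [← mul_assoc, mul_comm δ' δ]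
  have hwbound : α.toFun w ≤ δ * δ' * α.toFun x :=
    le_trans (hsub _ _) (max_le h1 h2)
  rw [hwval]
  exact le_trans (hgb _) (le_trans (hhb _) hwbound)
end

section
/- Let ℓ ⊆ m be non-archimedean fields with |m*| = Γ, and (V,α) a splittable normed ℓ-vector space with base change norm α_m on V ⊗_ℓ m. For γ ∈ Γ, the kernel of the composition V^{α≤γ} ⊗_{ℓ°} m° → V_m^{α_m≤γ} → V_m^{α_m≤γ} ⊗_{m°} \tilde m equals V^{α<γ} ⊗_{ℓ°} m° + V^{α≤γ} ⊗_{ℓ°} m°°, where \tilde m is the residue field of m. -/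
open scoped TensorProduct

section Aux

variable {ℓ m : Type*} [Field ℓ] [Field m] [Algebra ℓ m]
    {Γ₀ : Type*} [LinearOrderedCommGroupWithZero Γ₀]
    {v : Valuation ℓ Γ₀} {w : Valuation m Γ₀}
    {V : Type*} [AddCommGroup V] [Module ℓ V]
    {α : NAnorm v V} {β : NAnorm w (m ⊗[ℓ] V)}

lemma aux_nanorm_zero {W : Type*} [AddCommGroup W] [Module m W] (δ : NAnorm w W) :
    δ.toFun 0 = 0 := (δ.eq_zero_iff' 0).2 rfl

variable (hβ : ∀ z : m ⊗[ℓ] V,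
      IsLeast {g : Γ₀ | ∃ (n : ℕ) (cs : Fin n → m) (vs : Fin n → V),
        z = ∑ i, cs i ⊗ₜ[ℓ] vs i ∧
        g = Finset.univ.sup fun i => w (cs i) * α.toFun (vs i)} (β.toFun z))

include hβ in
lemma aux_beta_tmul_le (c : m) (x : V) : β.toFun (c ⊗ₜ[ℓ] x) ≤ w c * α.toFun x := by
  refine (hβ (c ⊗ₜ[ℓ] x)).2 ⟨1, fun _ => c, fun _ => x, by simp, by simp⟩

variable {n : ℕ} {b : Module.Basis (Fin n) ℓ V}

lemma aux_alpha_coord (hb : α.Splits b) (x : V) (j : Fin n) :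
    v (b.repr x j) * α.toFun (b j) ≤ α.toFun x := by
  have h := hb (fun i => b.repr x i)
  rw [b.sum_repr x] at h
  rw [h]
  exact Finset.le_sup (f := fun i => v (b.repr x i) * α.toFun (b i)) (Finset.mem_univ j)

lemma aux_alpha_basis_ne (j : Fin n) : α.toFun (b j) ≠ 0 := by
  rw [Ne, α.eq_zero_iff']
  exact b.ne_zero j

include hβ in
lemma aux_beta_coord (hext : ∀ c : ℓ, w (algebraMap ℓ m c) = v c) (hb : α.Splits b)
    (t : m ⊗[ℓ] V) (j : Fin n) :
    w ((Algebra.TensorProduct.basis m b).repr t j) * α.toFun (b j) ≤ β.toFun t := by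
  obtain ⟨k, cs, vs, hte, hg⟩ := (hβ t).1
  have hb0 : (0:Γ₀) < α.toFun (b j) := lt_of_le_of_ne zero_le' (Ne.symm (aux_alpha_basis_ne j))
  have hrepr : (Algebra.TensorProduct.basis m b).repr t j
      = ∑ i, cs i * algebraMap ℓ m (b.repr (vs i) j) := by
    rw [hte, map_sum]
    simp [Finsupp.finset_sum_apply, Algebra.TensorProduct.basis_repr_tmul, Finsupp.smul_apply,
      smul_eq_mul]
  rw [← le_div_iff₀ hb0, hrepr, div_eq_mul_inv]
  refine w.map_sum_le fun i _ => ?_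
  rw [map_mul, hext, ← div_eq_mul_inv, le_div_iff₀ hb0, mul_assoc]
  calc w (cs i) * (v (b.repr (vs i) j) * α.toFun (b j))
      ≤ w (cs i) * α.toFun (vs i) := mul_le_mul_right (aux_alpha_coord hb _ j) _
    _ ≤ β.toFun t := hg ▸ Finset.le_sup (f := fun i => w (cs i) * α.toFun (vs i)) (Finset.mem_univ i)

end Aux

/-- The set of elements of `m ⊗_ℓ V` of the form `∑ cᵢ • (1 ⊗ xᵢ)` with constraints
`Q(|cᵢ|)` on the coefficients and `P(α(xᵢ))` on the vectors. -/
def MixedSpan {ℓ m : Type*} [Field ℓ] [Field m] [Algebra ℓ m]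
    {Γ₀ : Type*} [LinearOrderedCommGroupWithZero Γ₀]
    {v : Valuation ℓ Γ₀} (w : Valuation m Γ₀)
    {V : Type*} [AddCommGroup V] [Module ℓ V]
    (α : NAnorm v V) (P Q : Γ₀ → Prop) (z : m ⊗[ℓ] V) : Prop :=
  ∃ (n : ℕ) (c : Fin n → m) (x : Fin n → V),
    (∀ i, Q (w (c i))) ∧ (∀ i, P (α.toFun (x i))) ∧
    z = ∑ i, c i • ((1 : m) ⊗ₜ[ℓ] x i)

/-- for `|m*| = Γ`, the kernel of
`V^{α≤γ} ⊗_{ℓ°} m° → V_m^{α_m≤γ} ⊗_{m°} m̃` equals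
`V^{α<γ} ⊗_{ℓ°} m° + V^{α≤γ} ⊗_{ℓ°} m°°`; elementwise inside `m ⊗_ℓ V`: an element
of the `m°`-span of `{1 ⊗ x : α(x) ≤ γ}` lies in `m°° · V_m^{α_m≤γ}` iff it decomposes
as a sum of an element of the `m°`-span of `{1 ⊗ x : α(x) < γ}` and an element of the
`m°°`-span of `{1 ⊗ x : α(x) ≤ γ}`. -/
theorem base_change_ball_kernel {ℓ m : Type*} [Field ℓ] [Field m] [Algebra ℓ m]
    {Γ₀ : Type*} [LinearOrderedCommGroupWithZero Γ₀]
    (v : Valuation ℓ Γ₀) (w : Valuation m Γ₀)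
    (hext : ∀ c : ℓ, w (algebraMap ℓ m c) = v c)
    (V : Type*) [AddCommGroup V] [Module ℓ V] [FiniteDimensional ℓ V]
    (α : NAnorm v V) (hsp : α.IsSplittable)
    (β : NAnorm w (m ⊗[ℓ] V))
    (hβ : ∀ z : m ⊗[ℓ] V,
      IsLeast {g : Γ₀ | ∃ (n : ℕ) (cs : Fin n → m) (vs : Fin n → V),
        z = ∑ i, cs i ⊗ₜ[ℓ] vs i ∧
        g = Finset.univ.sup fun i => w (cs i) * α.toFun (vs i)} (β.toFun z))
    (γ : Γ₀) (hγ : γ ≠ 0)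
    (hfull : ∀ γ' : Γ₀, γ' ≠ 0 → ∃ c : m, w c = γ') :
    ∀ z : m ⊗[ℓ] V, MixedSpan w α (· ≤ γ) (· ≤ 1) z →
      ((∃ (n : ℕ) (d : Fin n → m) (t : Fin n → (m ⊗[ℓ] V)),
          (∀ i, w (d i) < 1) ∧ (∀ i, β.toFun (t i) ≤ γ) ∧ z = ∑ i, d i • t i)
        ↔ ∃ z₁ z₂ : m ⊗[ℓ] V, z = z₁ + z₂ ∧
            MixedSpan w α (· < γ) (· ≤ 1) z₁ ∧ MixedSpan w α (· ≤ γ) (· < 1) z₂) := by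
  classical
  obtain ⟨N, b, hb⟩ := hsp
  have hγpos : (0:Γ₀) < γ := zero_lt_iff.2 hγ
  have hα0 : α.toFun 0 = 0 := (α.eq_zero_iff' 0).2 rfl
  have hβ0 : β.toFun 0 = 0 := (β.eq_zero_iff' 0).2 rfl
  have hβle : ∀ x : V, β.toFun ((1:m) ⊗ₜ[ℓ] x) ≤ α.toFun x := by
    intro x
    simpa using aux_beta_tmul_le hβ 1 x
  intro z hz
  obtain ⟨nc, c, x, hc1, hxγ, hzc⟩ := hz
  constructor
  · rintro ⟨n, d, t, hd, ht, hzd⟩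
    set B := Algebra.TensorProduct.basis m b with hBdef
    set e : Fin N → m := fun j => B.repr z j with he
    have hbpos : ∀ j, (0:Γ₀) < α.toFun (b j) :=
      fun j => zero_lt_iff.2 (aux_alpha_basis_ne j)
    -- Step 1: strict bound on coordinates of z
    have hstep1 : ∀ j, w (e j) * α.toFun (b j) < γ := by
      intro j
      have hez : e j = ∑ i, d i * B.repr (t i) j := by
        rw [he]
        simp only [hzd, map_sum, map_smul, Finsupp.coe_finset_sum, Finset.sum_apply,
          Finsupp.coe_smul, Pi.smul_apply, smul_eq_mul]
      rw [← lt_div_iff₀ (hbpos j), hez]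
      refine w.map_sum_lt (div_ne_zero hγ (hbpos j).ne') fun i _ => ?_
      rw [map_mul]
      calc w (d i) * w (B.repr (t i) j)
          ≤ w (d i) * (γ / α.toFun (b j)) := by
            refine mul_le_mul_right ((le_div_iff₀ (hbpos j)).2 ?_) _
            exact le_trans (aux_beta_coord hβ hext hb (t i) j) (ht i)
        _ < 1 * (γ / α.toFun (b j)) := by
            exact mul_lt_mul_of_pos_right (hd i) (zero_lt_iff.2 (div_ne_zero hγ (hbpos j).ne'))
        _ = γ / α.toFun (b j) := one_mul _
    -- Step 2: find good denominators
    have hstep2 : ∀ j, e j ≠ 0 → ∃ a : ℓ, w (e j) ≤ v a ∧ v a * α.toFun (b j) ≤ γ := by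
      intro j hej
      by_contra hcon
      push_neg at hcon
      have hax : ∀ i, v (b.repr (x i) j) * α.toFun (b j) ≤ γ :=
        fun i => le_trans (aux_alpha_coord hb (x i) j) (hxγ i)
      have hlt : ∀ i, v (b.repr (x i) j) < w (e j) :=
        fun i => lt_of_not_ge fun hle => absurd (hax i) (not_le.2 (hcon _ hle))
      have hez : e j = ∑ i, c i * algebraMap ℓ m (b.repr (x i) j) := by
        rw [he]
        simp only [hzc, map_sum, map_smul, Finsupp.coe_finset_sum, Finset.sum_apply,
          Finsupp.coe_smul, Pi.smul_apply, smul_eq_mul,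
          Algebra.TensorProduct.basis_repr_tmul, Finsupp.mapRange_apply, one_mul, hBdef]
      have : w (e j) < w (e j) := by
        conv_lhs => rw [hez]
        refine w.map_sum_lt (w.ne_zero_iff.2 hej) fun i _ => ?_
        rw [map_mul, hext]
        calc w (c i) * v (b.repr (x i) j)
            ≤ 1 * v (b.repr (x i) j) := mul_le_mul_left (hc1 i) _
          _ = v (b.repr (x i) j) := one_mul _
          _ < w (e j) := hlt i
      exact absurd this (lt_irrefl _)
    -- Step 3: normalize each coordinate term
    have h3 : ∀ j, ∃ (c' : m) (x' : V), w c' ≤ 1 ∧ α.toFun x' ≤ γ ∧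
        w c' * α.toFun x' < γ ∧ e j • (B j) = c' • ((1:m) ⊗ₜ[ℓ] x') := by
      intro j
      by_cases hej : e j = 0
      · exact ⟨0, 0, by simp, by simp [hα0, hγpos.le], by simp [hγpos], by simp [hej]⟩
      · obtain ⟨a, hwa, haγ⟩ := hstep2 j hej
        have hva : v a ≠ 0 := fun h => hej (w.zero_iff.1 (le_antisymm (h ▸ hwa) zero_le'))
        have halg : algebraMap ℓ m a ≠ 0 := w.ne_zero_iff.1 (by rw [hext]; exact hva)
        refine ⟨e j * (algebraMap ℓ m a)⁻¹, a • b j, ?_, ?_, ?_, ?_⟩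
        · rw [map_mul, map_inv₀, hext, ← div_eq_mul_inv]
          exact (div_le_one₀ (zero_lt_iff.2 hva)).2 hwa
        · rw [α.smul']; exact haγ
        · rw [map_mul, map_inv₀, hext, α.smul']
          calc w (e j) * (v a)⁻¹ * (v a * α.toFun (b j))
              = w (e j) * ((v a)⁻¹ * v a) * α.toFun (b j) := by simp only [mul_assoc]
            _ = w (e j) * α.toFun (b j) := by rw [inv_mul_cancel₀ hva, mul_one]
            _ < γ := hstep1 j
        · have h1 : (algebraMap ℓ m a) • ((1:m) ⊗ₜ[ℓ] b j) = (1:m) ⊗ₜ[ℓ] (a • b j) := by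
            rw [TensorProduct.smul_tmul', smul_eq_mul, mul_one, ← TensorProduct.smul_tmul,
              Algebra.smul_def, mul_one]
          rw [hBdef, Algebra.TensorProduct.basis_apply, ← h1, smul_smul, mul_assoc,
            inv_mul_cancel₀ halg, mul_one]
    choose c' x' hc' hx' hcx' heqj using h3
    have hclass : ∀ j, ¬ α.toFun (x' j) < γ → w (c' j) < 1 := by
      intro j hnot
      have hxeq : α.toFun (x' j) = γ := le_antisymm (hx' j) (not_lt.1 hnot)
      have := hcx' j
      rw [hxeq] at this
      have h1γ : w (c' j) * γ < 1 * γ := by rwa [one_mul]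
      exact lt_of_mul_lt_mul_right h1γ zero_le'
    refine ⟨∑ j, if α.toFun (x' j) < γ then c' j • ((1:m) ⊗ₜ[ℓ] x' j) else 0,
        ∑ j, if α.toFun (x' j) < γ then 0 else c' j • ((1:m) ⊗ₜ[ℓ] x' j), ?_, ?_, ?_⟩
    · rw [← Finset.sum_add_distrib]
      have hzsum : z = ∑ j, e j • B j := (B.sum_repr z).symm
      rw [hzsum]
      refine Finset.sum_congr rfl fun j _ => ?_
      by_cases h : α.toFun (x' j) < γ <;> simp [h, heqj j]
    · refine ⟨N, fun j => if α.toFun (x' j) < γ then c' j else 0,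
        fun j => if α.toFun (x' j) < γ then x' j else 0, fun j => ?_, fun j => ?_, ?_⟩
      · by_cases h : α.toFun (x' j) < γ <;> simp [h, hc' j]
      · by_cases h : α.toFun (x' j) < γ <;> simp [h, hα0, hγpos]
      · refine Finset.sum_congr rfl fun j _ => ?_
        by_cases h : α.toFun (x' j) < γ <;> simp [h]
    · refine ⟨N, fun j => if α.toFun (x' j) < γ then 0 else c' j,
        fun j => if α.toFun (x' j) < γ then 0 else x' j, fun j => ?_, fun j => ?_, ?_⟩
      · by_cases h : α.toFun (x' j) < γ <;>
          simp [h, hclass j, zero_lt_iff.2 (one_ne_zero (α := Γ₀))]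
      · by_cases h : α.toFun (x' j) < γ <;> simp [h, hα0, hγpos.le, hx' j]
      · refine Finset.sum_congr rfl fun j _ => ?_
        by_cases h : α.toFun (x' j) < γ <;> simp [h]
  · rintro ⟨z₁, z₂, hzeq, ⟨n₁, c₁, x₁, hc₁, hx₁, hz₁⟩, ⟨n₂, c₂, x₂, hc₂, hx₂, hz₂⟩⟩
    have h01 : (0:Γ₀) < 1 := zero_lt_iff.2 one_ne_zero
    have key₁ : ∀ i : Fin n₁, ∃ (dd : m) (tt : m ⊗[ℓ] V), w dd < 1 ∧ β.toFun tt ≤ γ ∧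
        c₁ i • ((1:m) ⊗ₜ[ℓ] x₁ i) = dd • tt := by
      intro i
      by_cases hx0 : α.toFun (x₁ i) = 0
      · have hx : x₁ i = 0 := (α.eq_zero_iff' _).1 hx0
        exact ⟨0, 0, by simp [h01], by simp [hβ0, hγpos.le], by simp [hx]⟩
      · obtain ⟨s, hs⟩ := hfull (γ⁻¹ * α.toFun (x₁ i)) (mul_ne_zero (inv_ne_zero hγ) hx0)
        have hs0 : s ≠ 0 := w.ne_zero_iff.1 (hs ▸ mul_ne_zero (inv_ne_zero hγ) hx0)
        refine ⟨s, (s⁻¹ * c₁ i) • ((1:m) ⊗ₜ[ℓ] x₁ i), ?_, ?_, ?_⟩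
        · rw [hs]
          calc γ⁻¹ * α.toFun (x₁ i) < γ⁻¹ * γ :=
              mul_lt_mul_of_pos_left (hx₁ i) (zero_lt_iff.2 (inv_ne_zero hγ))
            _ = 1 := inv_mul_cancel₀ hγ
        · rw [β.smul', map_mul, map_inv₀, hs]
          calc (γ⁻¹ * α.toFun (x₁ i))⁻¹ * w (c₁ i) * β.toFun ((1:m) ⊗ₜ[ℓ] x₁ i)
              ≤ (γ⁻¹ * α.toFun (x₁ i))⁻¹ * 1 * α.toFun (x₁ i) := by
                refine mul_le_mul' (mul_le_mul_right (hc₁ i) _) (hβle _)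
            _ = γ := by
                rw [mul_one, mul_inv_rev, inv_inv, mul_comm ((α.toFun (x₁ i))⁻¹) γ,
                  mul_assoc, inv_mul_cancel₀ hx0, mul_one]
        · rw [smul_smul, ← mul_assoc, mul_inv_cancel₀ hs0, one_mul]
    have key₂ : ∀ i : Fin n₂, ∃ (dd : m) (tt : m ⊗[ℓ] V), w dd < 1 ∧ β.toFun tt ≤ γ ∧
        c₂ i • ((1:m) ⊗ₜ[ℓ] x₂ i) = dd • tt :=
      fun i => ⟨c₂ i, (1:m) ⊗ₜ[ℓ] x₂ i, hc₂ i, le_trans (hβle _) (hx₂ i), rfl⟩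
    choose d₁ t₁ hd₁ ht₁ heq₁ using key₁
    choose d₂ t₂ hd₂ ht₂ heq₂ using key₂
    refine ⟨n₁ + n₂, Fin.addCases d₁ d₂, Fin.addCases t₁ t₂, fun i => ?_, fun i => ?_, ?_⟩
    · refine Fin.addCases (fun i => ?_) (fun i => ?_) i <;> simp [hd₁, hd₂]
    · refine Fin.addCases (fun i => ?_) (fun i => ?_) i <;> simp [ht₁, ht₂]
    · rw [hzeq, hz₁, hz₂, Fin.sum_univ_add]
      simp only [Fin.addCases_left, Fin.addCases_right]
      exact congrArg₂ (· + ·) (Finset.sum_congr rfl fun i _ => heq₁ i)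
        (Finset.sum_congr rfl fun i _ => heq₂ i)
end
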